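/- arXiv:2410.05790 — 4 statements merged into one kernel-verified Lean document; each statement's English description precedes it below -/
import Mathlib

section
/- For every polynomial p(x) = 1 + p₁x + ⋯ + p_m x^m ∈ K[x] with constant term 1, writing p(c) := 1 + p₁c + ⋯ + p_m c^m ∈ A, the image of J under right multiplication by p(c) equals J; that is, {a·p(c) : a ∈ J} = J. -/
open scoped Polynomial

noncomputable section

/-- The relation `X * Y = 1` defining the Jacobson algebra. -/
def JacRel (K : Type) [Field K] : FreeAlgebra K (Fin 2) → FreeAlgebra K (Fin 2) → Prop :=
  fun a b => a = FreeAlgebra.ι K (0 : Fin 2) * FreeAlgebra.ι K (1 : Fin 2) ∧ b = 1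

/-- The Jacobson algebra `K⟨X, Y ∣ XY = 1⟩`. -/
abbrev Jac (K : Type) [Field K] := RingQuot (JacRel K)

variable (K : Type) [Field K]

/-- The generator `X`. -/
def Xg : Jac K := RingQuot.mkAlgHom K (JacRel K) (FreeAlgebra.ι K 0)
/-- The generator `Y`. -/
def Yg : Jac K := RingQuot.mkAlgHom K (JacRel K) (FreeAlgebra.ι K 1)

/-- `c = Y²X`. -/
def cE : Jac K := Yg K ^ 2 * Xg K
/-- `w = 1 - YX`. -/
def wE : Jac K := 1 - Yg K * Xg K

/-- The two-sided ideal of the Jacobson algebra generated by `w = 1 - YX`. -/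
def JacJ : TwoSidedIdeal (Jac K) := TwoSidedIdeal.span {wE K}

/-!
Every `b ∈ J` is killed on the right by a power of `Y`: this holds for `w` since `wY = 0`,
and the elements with this property form a two-sided ideal because `X Y^(n+1) = Y^n`.
As `c^(n+1) = Y^(n+1) · YX`, some power of `c` kills `b` as well. Writing `p = 1 - t` with
`t ∈ x K[x]`, the truncated geometric series `q = ∑_{k<N} t^k` satisfies `q p = 1 - t^N`, so
`b q(c) ∈ J` is a preimage of `b`.
-/

open Polynomial Finset

theorem mul_aeval_geom_sum_mul_aeval_eq {R A : Type*} [CommRing R] [Ring A] [Algebra R A]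
    {b c : A} {N : ℕ} (hb : b * c ^ N = 0) {p : R[X]} (hp : p.coeff 0 = 1) :
    b * aeval c (∑ k ∈ range N, (1 - p) ^ k) * aeval c p = b := by
  obtain ⟨r, hr⟩ : X ∣ 1 - p := X_dvd_iff.mpr (by simp [hp])
  have hkill : b * aeval c ((1 - p) ^ N) = 0 := by
    rw [hr, mul_pow, map_mul, map_pow, aeval_X, ← mul_assoc, hb, zero_mul]
  have hgeom : (∑ k ∈ range N, (1 - p) ^ k) * p = 1 - (1 - p) ^ N := by
    simpa using geom_sum_mul_neg (1 - p) N
  rw [mul_assoc, ← map_mul, hgeom, map_sub, map_one, mul_sub, mul_one, hkill, sub_zero]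

theorem sq_mul_pow_succ_of_mul_eq_one {M : Type*} [Monoid M] {x y : M} (h : x * y = 1) (n : ℕ) :
    (y ^ 2 * x) ^ (n + 1) = y ^ (n + 1) * (y * x) := by
  induction n with
  | zero => simp only [zero_add, pow_one, sq, mul_assoc]
  | succ n ih =>
    rw [pow_succ, ih, sq]
    simp only [pow_succ, mul_assoc, ← mul_assoc x y, h, one_mul]

theorem mul_pow_eq_zero_of_le {M₀ : Type*} [MonoidWithZero M₀] {b y : M₀} {n m : ℕ}
    (h : b * y ^ n = 0) (hnm : n ≤ m) : b * y ^ m = 0 := by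
  obtain ⟨k, rfl⟩ := Nat.exists_eq_add_of_le hnm
  rw [pow_add, ← mul_assoc, h, zero_mul]

theorem exists_add_mul_pow_eq_zero {S : Type*} [Semiring S] {a b y : S}
    (ha : ∃ n, a * y ^ n = 0) (hb : ∃ n, b * y ^ n = 0) : ∃ n, (a + b) * y ^ n = 0 := by
  obtain ⟨n₁, hn₁⟩ := ha
  obtain ⟨n₂, hn₂⟩ := hb
  refine ⟨max n₁ n₂, ?_⟩
  rw [add_mul, mul_pow_eq_zero_of_le hn₁ (le_max_left _ _),
    mul_pow_eq_zero_of_le hn₂ (le_max_right _ _), add_zero]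

theorem exists_mul_mul_pow_eq_zero_of_adjoin_eq_top {R A : Type*} [CommSemiring R] [Semiring A]
    [Algebra R A] {s : Set A} (hs : Algebra.adjoin R s = ⊤) {y : A}
    (hgen : ∀ g ∈ s, ∀ b : A, (∃ n, b * y ^ n = 0) → ∃ n, b * g * y ^ n = 0)
    (a : A) {b : A} (hb : ∃ n, b * y ^ n = 0) : ∃ n, b * a * y ^ n = 0 := by
  have ha : a ∈ Algebra.adjoin R s := hs ▸ Algebra.mem_top
  induction ha using Algebra.adjoin_induction generalizing b with
  | mem g hg => exact hgen g hg b hb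
  | algebraMap r =>
    obtain ⟨n, hn⟩ := hb
    exact ⟨n, by rw [← Algebra.commutes, mul_assoc, hn, mul_zero]⟩
  | add a₁ a₂ _ _ h₁ h₂ =>
    rw [mul_add]
    exact exists_add_mul_pow_eq_zero (h₁ hb) (h₂ hb)
  | mul a₁ a₂ _ _ h₁ h₂ =>
    rw [← mul_assoc]
    exact h₂ (h₁ hb)

theorem Xg_mul_Yg : Xg K * Yg K = 1 := by
  simpa [Xg, Yg] using RingQuot.mkAlgHom_rel K (s := JacRel K) ⟨rfl, rfl⟩

theorem wE_mul_Yg : wE K * Yg K = 0 := by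
  rw [wE, sub_mul, one_mul, mul_assoc, Xg_mul_Yg, mul_one, sub_self]

theorem adjoin_Xg_Yg : Algebra.adjoin K {Xg K, Yg K} = ⊤ := by
  have hrange : Set.range (fun i => RingQuot.mkAlgHom K (JacRel K) (FreeAlgebra.ι K i)) =
      {Xg K, Yg K} := by
    ext a
    simp only [Set.mem_range, Set.mem_insert_iff, Set.mem_singleton_iff, Fin.exists_fin_two,
      Xg, Yg, eq_comm]
  rw [← hrange, Algebra.adjoin_range_eq_range_freeAlgebra_lift, AlgHom.range_eq_top]
  convert RingQuot.mkAlgHom_surjective K (JacRel K)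
  ext i
  simp

theorem exists_mul_mul_Yg_pow_eq_zero (a : Jac K) {b : Jac K} (hb : ∃ n, b * Yg K ^ n = 0) :
    ∃ n, b * a * Yg K ^ n = 0 := by
  refine exists_mul_mul_pow_eq_zero_of_adjoin_eq_top (adjoin_Xg_Yg K) ?_ a hb
  rintro g (rfl | rfl) b ⟨n, hn⟩
  · exact ⟨n + 1, by rw [pow_succ', mul_assoc, ← mul_assoc (Xg K), Xg_mul_Yg, one_mul, hn]⟩
  · exact ⟨n, by rw [mul_assoc, ← pow_succ', mul_pow_eq_zero_of_le hn n.le_succ]⟩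

theorem exists_mul_Yg_pow_eq_zero_of_mem_JacJ {b : Jac K} (hb : b ∈ JacJ K) :
    ∃ n, b * Yg K ^ n = 0 := by
  induction hb using TwoSidedIdeal.span_induction with
  | mem x hx => exact ⟨1, by rw [Set.mem_singleton_iff.mp hx, pow_one, wE_mul_Yg]⟩
  | zero => exact ⟨0, zero_mul _⟩
  | add x y _ _ hx hy => exact exists_add_mul_pow_eq_zero hx hy
  | neg x _ hx =>
    obtain ⟨n, hn⟩ := hx
    exact ⟨n, (neg_mul x _).trans (by rw [hn, neg_zero])⟩
  | left_absorb a x _ hx =>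
    obtain ⟨n, hn⟩ := hx
    exact ⟨n, by rw [mul_assoc, hn, mul_zero]⟩
  | right_absorb a x _ hx => exact exists_mul_mul_Yg_pow_eq_zero K a hx

/-- For every polynomial `p` with constant term `1`, right multiplication by
`p(c)` maps the two-sided ideal `J = ⟨w⟩` onto itself: `{a * p(c) : a ∈ J} = J`. -/
theorem stmt0 (p : Polynomial K) (hp : p.coeff 0 = 1) :
    (fun a : Jac K => a * Polynomial.aeval (cE K) p) '' (JacJ K : Set (Jac K)) =
      (JacJ K : Set (Jac K)) := by
  ext b
  constructor
  · rintro ⟨a, ha, rfl⟩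
    exact (JacJ K).mul_mem_right _ _ ha
  · intro hb
    obtain ⟨n, hn⟩ := exists_mul_Yg_pow_eq_zero_of_mem_JacJ K hb
    have hc : b * cE K ^ (n + 1) = 0 := by
      rw [cE, sq_mul_pow_succ_of_mul_eq_one (Xg_mul_Yg K), ← mul_assoc,
        mul_pow_eq_zero_of_le hn n.le_succ, zero_mul]
    exact ⟨_, (JacJ K).mul_mem_right _ _ hb, mul_aeval_geom_sum_mul_aeval_eq hc hp⟩
end
end

section
/- If E′ is an injective left A/J-module, then E′, regarded as a left A-module via the canonical projection A → A/J, is an injective left A-module. -/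
noncomputable section

variable (K : Type) [Field K]

namespace JacAux

lemma hXY : Xg K * Yg K = 1 := by
  have h : JacRel K (FreeAlgebra.ι K (0 : Fin 2) * FreeAlgebra.ι K (1 : Fin 2)) 1 := ⟨rfl, rfl⟩
  have := RingQuot.mkAlgHom_rel K h
  simpa [Xg, Yg, map_mul, map_one] using this

lemma hwY : wE K * Yg K = 0 := by
  rw [wE, sub_mul, one_mul, mul_assoc, hXY, mul_one, sub_self]

lemma hXw : Xg K * wE K = 0 := by
  rw [wE, mul_sub, mul_one, ← mul_assoc, hXY, one_mul, sub_self]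

lemma hww : wE K * wE K = wE K := by
  nth_rewrite 2 [wE]
  rw [mul_sub, mul_one, ← mul_assoc, hwY, zero_mul, sub_zero]

lemma hkey : ∀ i j : ℕ, wE K * (Xg K ^ i * (Yg K ^ j * wE K)) =
    if i = j then wE K else 0 := by
  intro i
  induction i with
  | zero =>
    intro j
    cases j with
    | zero => simp [hww]
    | succ j =>
      rw [pow_zero, one_mul, pow_succ']
      rw [show Yg K * Yg K ^ j * wE K = Yg K * (Yg K ^ j * wE K) by rw [mul_assoc]]
      rw [← mul_assoc, hwY, zero_mul]
      simp
  | succ i ih =>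
    intro j
    cases j with
    | zero =>
      rw [pow_zero, one_mul, pow_succ]
      rw [show Xg K ^ i * Xg K * wE K = Xg K ^ i * (Xg K * wE K) by rw [mul_assoc]]
      rw [hXw, mul_zero, mul_zero]
      simp
    | succ j =>
      have e1 : Xg K ^ (i + 1) * (Yg K ^ (j + 1) * wE K) = Xg K ^ i * (Yg K ^ j * wE K) := by
        rw [pow_succ, pow_succ']
        calc Xg K ^ i * Xg K * (Yg K * Yg K ^ j * wE K)
            = Xg K ^ i * ((Xg K * Yg K) * (Yg K ^ j * wE K)) := by
              simp only [mul_assoc]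
          _ = Xg K ^ i * (Yg K ^ j * wE K) := by rw [hXY, one_mul]
      rw [e1, ih j]
      simp [Nat.succ_inj]

/-- Partial sums of matrix idempotents: `e_n = ∑_{i<n} Y^i w X^i`. -/
def en (n : ℕ) : Jac K := ∑ i ∈ Finset.range n, Yg K ^ i * (wE K * Xg K ^ i)

lemma en_mem (n : ℕ) : en K n ∈ JacJ K := by
  refine sum_mem fun i _ => ?_
  exact (JacJ K).mul_mem_left _ _ ((JacJ K).mul_mem_right _ _ (TwoSidedIdeal.subset_span rfl))

lemma hen {i n : ℕ} (h : i < n) : en K n * (Yg K ^ i * wE K) = Yg K ^ i * wE K := by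
  rw [en, Finset.sum_mul]
  have hterm : ∀ k, (Yg K ^ k * (wE K * Xg K ^ k)) * (Yg K ^ i * wE K)
      = if k = i then Yg K ^ i * wE K else 0 := by
    intro k
    calc (Yg K ^ k * (wE K * Xg K ^ k)) * (Yg K ^ i * wE K)
        = Yg K ^ k * (wE K * (Xg K ^ k * (Yg K ^ i * wE K))) := by
          simp only [mul_assoc]
      _ = Yg K ^ k * (if k = i then wE K else 0) := by rw [hkey]
      _ = if k = i then Yg K ^ i * wE K else 0 := by
          split
          · next hk => subst hk; rfl
          · rw [mul_zero]
  simp only [hterm]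
  rw [Finset.sum_ite_eq' (Finset.range n) i]
  simp [Finset.mem_range.mpr h]

lemma hmono {n m : ℕ} (h : n ≤ m) : en K m * en K n = en K n := by
  nth_rewrite 1 [en]
  rw [en, Finset.mul_sum]
  refine Finset.sum_congr rfl fun i hi => ?_
  have hi' : i < m := lt_of_lt_of_le (Finset.mem_range.mp hi) h
  calc en K m * (Yg K ^ i * (wE K * Xg K ^ i))
      = (en K m * (Yg K ^ i * wE K)) * Xg K ^ i := by simp only [mul_assoc]
    _ = (Yg K ^ i * wE K) * Xg K ^ i := by rw [hen K hi']
    _ = Yg K ^ i * (wE K * Xg K ^ i) := by rw [mul_assoc]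

/-- The set of elements with a "local left unit" from the `e_n` family. -/
def T : Set (Jac K) := {x | ∃ n, en K n * x = x}

lemma T_upgrade {x : Jac K} {n m : ℕ} (hx : en K n * x = x) (h : n ≤ m) :
    en K m * x = x := by
  conv_lhs => rw [← hx]
  rw [← mul_assoc, hmono K h, hx]

lemma T_zero : (0 : Jac K) ∈ T K := ⟨0, mul_zero _⟩

lemma T_add {x y : Jac K} (hx : x ∈ T K) (hy : y ∈ T K) : x + y ∈ T K := by
  obtain ⟨n, hn⟩ := hx
  obtain ⟨m, hm⟩ := hy
  exact ⟨max n m, by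
    rw [mul_add, T_upgrade K hn (le_max_left n m), T_upgrade K hm (le_max_right n m)]⟩

lemma T_neg {x : Jac K} (hx : x ∈ T K) : -x ∈ T K := by
  obtain ⟨n, hn⟩ := hx
  refine ⟨n, ?_⟩
  exact (mul_neg _ _).trans (congrArg Neg.neg hn)


lemma T_mul_right {x y : Jac K} (hx : x ∈ T K) : x * y ∈ T K := by
  obtain ⟨n, hn⟩ := hx
  exact ⟨n, by rw [← mul_assoc, hn]⟩

lemma T_smul {c : K} {x : Jac K} (hx : x ∈ T K) : c • x ∈ T K := by
  obtain ⟨n, hn⟩ := hx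
  exact ⟨n, by rw [mul_smul_comm, hn]⟩

/-- The span of the `Y^i w`. -/
def P : Submodule K (Jac K) := Submodule.span K (Set.range fun i : ℕ => Yg K ^ i * wE K)

lemma P_sub_T : (P K : Set (Jac K)) ⊆ T K := by
  intro p hp
  induction hp using Submodule.span_induction with
  | mem x hx =>
    obtain ⟨i, rfl⟩ := hx
    exact ⟨i + 1, hen K (Nat.lt_succ_self i)⟩
  | zero => exact T_zero K
  | add x y _ _ hx hy => exact T_add K hx hy
  | smul c x _ hx => exact T_smul K hx

lemma X_mul_P {p : Jac K} (hp : p ∈ P K) : Xg K * p ∈ P K := by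
  induction hp using Submodule.span_induction with
  | mem x hx =>
    obtain ⟨i, rfl⟩ := hx
    show Xg K * (Yg K ^ i * wE K) ∈ P K
    cases i with
    | zero =>
      rw [pow_zero, one_mul, hXw]
      exact zero_mem _
    | succ i =>
      rw [pow_succ']
      rw [show Xg K * (Yg K * Yg K ^ i * wE K) = (Xg K * Yg K) * (Yg K ^ i * wE K) by
        simp only [mul_assoc]]
      rw [hXY, one_mul]
      exact Submodule.subset_span ⟨i, rfl⟩
  | zero => rw [mul_zero]; exact zero_mem _
  | add x y _ _ hx hy => rw [mul_add]; exact add_mem hx hy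
  | smul c x _ hx => rw [mul_smul_comm]; exact Submodule.smul_mem _ _ hx

lemma Y_mul_P {p : Jac K} (hp : p ∈ P K) : Yg K * p ∈ P K := by
  induction hp using Submodule.span_induction with
  | mem x hx =>
    obtain ⟨i, rfl⟩ := hx
    show Yg K * (Yg K ^ i * wE K) ∈ P K
    rw [← mul_assoc, ← pow_succ']
    exact Submodule.subset_span ⟨i + 1, rfl⟩
  | zero => rw [mul_zero]; exact zero_mem _
  | add x y _ _ hx hy => rw [mul_add]; exact add_mem hx hy
  | smul c x _ hx => rw [mul_smul_comm]; exact Submodule.smul_mem _ _ hx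

lemma mul_P (a : Jac K) {p : Jac K} (hp : p ∈ P K) : a * p ∈ P K := by
  have main : ∀ f : FreeAlgebra K (Fin 2),
      ∀ p ∈ P K, RingQuot.mkAlgHom K (JacRel K) f * p ∈ P K := by
    intro f
    induction f using FreeAlgebra.induction with
    | grade0 r =>
      intro p hp
      rw [AlgHom.commutes, ← Algebra.smul_def]
      exact Submodule.smul_mem _ _ hp
    | grade1 x =>
      intro p hp
      fin_cases x
      · exact X_mul_P K hp
      · exact Y_mul_P K hp
    | mul a b ha hb =>
      intro p hp
      rw [map_mul, mul_assoc]
      exact ha _ (hb _ hp)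
    | add a b ha hb =>
      intro p hp
      rw [map_add, add_mul]
      exact add_mem (ha _ hp) (hb _ hp)
  obtain ⟨f, rfl⟩ := RingQuot.mkAlgHom_surjective K (JacRel K) a
  exact main f p hp

lemma T_mul_left {x y : Jac K} (hy : y ∈ T K) : x * y ∈ T K := by
  obtain ⟨n, hn⟩ := hy
  have h1 : x * en K n ∈ T K := by
    rw [en, Finset.mul_sum]
    refine Finset.sum_induction _ (· ∈ T K) (fun a b => T_add K) (T_zero K) ?_
    intro i _
    have e : x * (Yg K ^ i * (wE K * Xg K ^ i)) = (x * (Yg K ^ i * wE K)) * Xg K ^ i := by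
      simp only [mul_assoc]
    rw [e]
    exact T_mul_right K (P_sub_T K (mul_P K x (Submodule.subset_span ⟨i, rfl⟩)))
  obtain ⟨m, hm⟩ := h1
  refine ⟨m, ?_⟩
  calc en K m * (x * y) = en K m * (x * (en K n * y)) := by rw [hn]
    _ = (en K m * (x * en K n)) * y := by simp only [mul_assoc]
    _ = (x * en K n) * y := by rw [hm]
    _ = x * y := by rw [mul_assoc, hn]

/-- `T` as a two-sided ideal. -/
def Tideal : TwoSidedIdeal (Jac K) :=
  TwoSidedIdeal.mk' (T K) (T_zero K) (T_add K) (T_neg K) (T_mul_left K) (T_mul_right K)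

lemma hJT {x : Jac K} (hx : x ∈ JacJ K) : ∃ n, en K n * x = x := by
  have hw : wE K ∈ Tideal K := by
    rw [Tideal, TwoSidedIdeal.mem_mk']
    refine ⟨1, ?_⟩
    have : en K 1 = wE K := by simp [en]
    rw [this, hww]
  have : x ∈ Tideal K := TwoSidedIdeal.mem_span_iff.mp hx (Tideal K) (by
    intro z hz
    rw [Set.mem_singleton_iff] at hz
    subst hz
    exact hw)
  rwa [Tideal, TwoSidedIdeal.mem_mk'] at this

set_option maxHeartbeats 1000000 in
set_option synthInstance.maxHeartbeats 400000 in
theorem aux (E' : Type) [AddCommGroup E'] [Module (JacJ K).ringCon.Quotient E']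
    (hinj : Module.Injective (JacJ K).ringCon.Quotient E') :
    @Module.Injective (Jac K) _ E' _ (Module.compHom E' (JacJ K).ringCon.mk') := by
  letI : Module (Jac K) E' := Module.compHom E' (JacJ K).ringCon.mk'
  set π : Jac K →+* (JacJ K).ringCon.Quotient := (JacJ K).ringCon.mk' with hπ
  have hsmul : ∀ (r : Jac K) (v : E'), r • v = π r • v := fun _ _ => rfl
  have hπsurj : Function.Surjective π := fun z => Quotient.inductionOn' z fun a => ⟨a, rfl⟩
  have hπ0 : ∀ x ∈ JacJ K, π x = 0 := by
    intro x hx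
    have h : (JacJ K).ringCon x 0 := ((JacJ K).rel_iff x 0).mpr (by simpa using hx)
    exact (RingCon.eq _).mpr h
  have hker : ∀ {x y : Jac K}, π x = π y → x - y ∈ JacJ K := by
    intro x y h
    exact ((JacJ K).rel_iff x y).mp ((RingCon.eq _).mp h)
  refine Module.Baer.injective ?_
  intro I g
  have hvan : ∀ (x y : Jac K) (hx : x ∈ I) (hy : y ∈ I), π x = π y →
      g ⟨x, hx⟩ = g ⟨y, hy⟩ := by
    intro x y hx hy hxy
    have hd : x - y ∈ JacJ K := hker hxy
    have hdI : x - y ∈ I := I.sub_mem hx hy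
    obtain ⟨n, hn⟩ := hJT K hd
    have h2 : g ⟨x - y, hdI⟩ = 0 := by
      have e : (en K n) • (⟨x - y, hdI⟩ : I) = ⟨x - y, hdI⟩ := Subtype.ext hn
      calc g ⟨x - y, hdI⟩ = g ((en K n) • ⟨x - y, hdI⟩) := by rw [e]
        _ = (en K n) • g ⟨x - y, hdI⟩ := map_smul g _ _
        _ = π (en K n) • g ⟨x - y, hdI⟩ := hsmul _ _
        _ = (0 : (JacJ K).ringCon.Quotient) • g ⟨x - y, hdI⟩ := by
            rw [hπ0 _ (en_mem K n)]
        _ = 0 := zero_smul _ _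
    have h3 : g ⟨x, hx⟩ - g ⟨y, hy⟩ = 0 := by
      rw [← map_sub]
      have h1 : (⟨x, hx⟩ : I) - ⟨y, hy⟩ = ⟨x - y, hdI⟩ := Subtype.ext rfl
      rw [h1, h2]
    exact sub_eq_zero.mp h3
  choose sec hsec1 hsec2 using fun y : (I.map π : Ideal ((JacJ K).ringCon.Quotient)) =>
    (Ideal.mem_map_iff_of_surjective π hπsurj).mp y.2
  set gbar : (I.map π : Ideal ((JacJ K).ringCon.Quotient)) →ₗ[(JacJ K).ringCon.Quotient] E' :=
    { toFun := fun y => g ⟨sec y, hsec1 y⟩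
      map_add' := fun a b => by
        have h : π (sec (a + b)) = π (sec a + sec b) := by
          rw [hsec2, map_add, hsec2, hsec2]
          rfl
        calc g ⟨sec (a + b), hsec1 _⟩
            = g ⟨sec a + sec b, I.add_mem (hsec1 a) (hsec1 b)⟩ := hvan _ _ _ _ h
          _ = g (⟨sec a, hsec1 a⟩ + ⟨sec b, hsec1 b⟩) := rfl
          _ = g ⟨sec a, hsec1 a⟩ + g ⟨sec b, hsec1 b⟩ := map_add g _ _
      map_smul' := fun c a => by
        obtain ⟨r, rfl⟩ := hπsurj c
        have h : π (sec (π r • a)) = π (r * sec a) := by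
          rw [hsec2, map_mul, hsec2]
          rfl
        calc g ⟨sec (π r • a), hsec1 _⟩
            = g ⟨r * sec a, I.mul_mem_left r (hsec1 a)⟩ := hvan _ _ _ _ h
          _ = g (r • ⟨sec a, hsec1 a⟩) := rfl
          _ = r • g ⟨sec a, hsec1 a⟩ := map_smul g _ _
          _ = π r • g ⟨sec a, hsec1 a⟩ := hsmul _ _ } with hgbar
  obtain ⟨h, hh⟩ := hinj.out (I.map π).subtype (Submodule.injective_subtype _) gbar
  refine ⟨{ toFun := fun a => h (π a)
            map_add' := fun a b => by
              show h (π (a + b)) = h (π a) + h (π b)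
              rw [map_add, map_add]
            map_smul' := fun r a => by
              show h (π (r • a)) = r • h (π a)
              rw [hsmul]
              have e : π (r • a) = π r * π a := by rw [smul_eq_mul, map_mul]
              rw [e]
              exact map_smul h (π r) (π a) }, ?_⟩
  intro x mem
  have memx : π x ∈ I.map π := Ideal.mem_map_of_mem π mem
  show h (π x) = g ⟨x, mem⟩
  have e : h (π x) = gbar ⟨π x, memx⟩ := hh ⟨π x, memx⟩
  rw [e]
  exact hvan _ _ (hsec1 _) mem (hsec2 _)

end JacAux

/-- If `E'` is an injective left `A/J`-module, then `E'`, regarded as a left `A`-module via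
the canonical projection `A → A/J`, is an injective left `A`-module. -/
theorem stmt2 (E' : Type) [AddCommGroup E'] [Module (JacJ K).ringCon.Quotient E']
    (hinj : Module.Injective (JacJ K).ringCon.Quotient E') :
    letI : Module (Jac K) E' := Module.compHom E' (JacJ K).ringCon.mk'
    Module.Injective (Jac K) E' := by
  exact JacAux.aux K E' hinj
end
end

section
/- Let I be an injective left S-module admitting an injective S-linear map S → I (for instance, an injective envelope of the left regular module S). Then every nonzero indecomposable injective left S-module E is a homomorphic image of I: there exists a surjective S-linear map I → E. -/
/-- A module is indecomposable if it is nonzero and is not the internal direct sum of two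
nonzero submodules. -/
def IsIndecomposableModule (S : Type) [Ring S] (E : Type) [AddCommGroup E] [Module S E] : Prop :=
  (∃ x : E, x ≠ 0) ∧
    ¬∃ N₁ N₂ : Submodule S E, N₁ ≠ ⊥ ∧ N₂ ≠ ⊥ ∧ IsCompl N₁ N₂

/-- Let `S` be a ring such that every quotient (i.e. surjective image) of an injective left
`S`-module is injective (e.g. `S` left hereditary). If `I` is an injective left `S`-module
admitting an injective `S`-linear map `S → I` (for instance an injective envelope of `S`),
then every nonzero indecomposable injective left `S`-module `E` is a homomorphic image of `I`. -/
theorem stmt4 (S : Type) [Ring S]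
    (hQuot : ∀ (M N : Type) [AddCommGroup M] [AddCommGroup N],
      ∀ [Module S M] [Module S N], ∀ f : M →ₗ[S] N, Function.Surjective f →
        Module.Injective S M → Module.Injective S N)
    (I : Type) [AddCommGroup I] [Module S I] (hI : Module.Injective S I)
    (j : S →ₗ[S] I) (hj : Function.Injective j)
    (E : Type) [AddCommGroup E] [Module S E]
    (hE : Module.Injective S E) (hind : IsIndecomposableModule S E) :
    ∃ φ : I →ₗ[S] E, Function.Surjective φ := by
  obtain ⟨⟨x, hx⟩, hnd⟩ := hind
  -- extend s ↦ s • x along j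
  obtain ⟨φ, hφ⟩ := hE.out j hj (LinearMap.toSpanSingleton S E x)
  refine ⟨φ, ?_⟩
  set N : Submodule S E := LinearMap.range φ with hN
  have hxN : x ∈ N := ⟨j 1, by simpa using hφ 1⟩
  have hNne : N ≠ ⊥ := by
    intro h
    rw [h, Submodule.mem_bot] at hxN
    exact hx hxN
  -- N is injective as a surjective image of I
  have hNinj : Module.Injective S ↥N :=
    hQuot I ↥N φ.rangeRestrict (LinearMap.surjective_rangeRestrict φ) hI
  -- extend id : N → N along the inclusion N ↪ E
  obtain ⟨r, hr⟩ := hNinj.out N.subtype (Submodule.injective_subtype N) LinearMap.id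
  have hcompl : IsCompl N (LinearMap.ker r) := by
    constructor
    · rw [disjoint_iff]
      ext y
      simp only [Submodule.mem_inf, Submodule.mem_bot, LinearMap.mem_ker]
      constructor
      · rintro ⟨hyN, hyr⟩
        have := hr ⟨y, hyN⟩
        simp only [Submodule.subtype_apply, LinearMap.id_apply] at this
        have : (⟨y, hyN⟩ : N) = 0 := by rw [← this, hyr]
        simpa using congrArg Subtype.val this
      · rintro rfl; exact ⟨N.zero_mem, map_zero r⟩
    · rw [codisjoint_iff, eq_top_iff]
      intro e _
      have he : e = (r e : E) + (e - (r e : E)) := by abel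
      rw [he]
      refine Submodule.add_mem_sup (r e).2 ?_
      simp only [LinearMap.mem_ker, map_sub]
      have := hr (r e)
      simp only [Submodule.subtype_apply, LinearMap.id_apply] at this
      rw [this, sub_self]
  have hker : LinearMap.ker r = ⊥ := by
    by_contra h
    exact hnd ⟨N, LinearMap.ker r, hNne, h, hcompl⟩
  have hNtop : N = ⊤ := by
    have := hcompl.sup_eq_top
    rwa [hker, sup_bot_eq] at this
  rw [← LinearMap.range_eq_top, ← hN, hNtop]
end

section
/- Let M := K[x] × (ℕ → K[x]) and define K-linear endomorphisms of M by P_Y(q₋₁,(q₀,q₁,q₂,…)) := (0,(q₋₁, q₀ − x·q₋₁, q₁, q₂, …)) and P_X(q₋₁,(q₀,q₁,q₂,…)) := (q₀,(x·q₀ + q₁, q₂, q₃, …)). Then P_X ∘ P_Y = id_M, and consequently there exists a unique K-algebra homomorphism A → End_K(M) sending X to P_X and Y to P_Y; this makes M into a left A-module. -/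
noncomputable section

variable (K : Type) [Field K]

/-- The underlying `K`-vector space `K[x] × (ℕ → K[x])` of the module `Θ`. -/
abbrev Theta (K : Type) [Field K] := Polynomial K × (ℕ → Polynomial K)

/-- The action of `Y`:
`(q₋₁,(q₀,q₁,q₂,…)) ↦ (0,(q₋₁, q₀ − x·q₋₁, q₁, q₂, …))`. -/
def PY : Theta K →ₗ[K] Theta K where
  toFun p := (0, fun n => match n with
    | 0 => p.1
    | 1 => p.2 0 - Polynomial.X * p.1
    | (k+2) => p.2 (k+1))
  map_add' a b := by
    refine Prod.ext (by simp) (funext fun n => ?_)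
    match n with
    | 0 => simp
    | 1 => simp; ring
    | (k+2) => simp
  map_smul' m a := by
    refine Prod.ext (by simp) (funext fun n => ?_)
    match n with
    | 0 => simp
    | 1 => simp [Polynomial.smul_eq_C_mul]; ring
    | (k+2) => simp

/-- The action of `X`:
`(q₋₁,(q₀,q₁,q₂,…)) ↦ (q₀,(x·q₀ + q₁, q₂, q₃, …))`. -/
def PX : Theta K →ₗ[K] Theta K where
  toFun p := (p.2 0, fun n => match n with
    | 0 => Polynomial.X * p.2 0 + p.2 1
    | (k+1) => p.2 (k+2))
  map_add' a b := by
    refine Prod.ext (by simp) (funext fun n => ?_)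
    match n with
    | 0 => simp; ring
    | (k+1) => simp
  map_smul' m a := by
    refine Prod.ext (by simp) (funext fun n => ?_)
    match n with
    | 0 => simp [Polynomial.smul_eq_C_mul]; ring
    | (k+1) => simp

/-- `P_X ∘ P_Y = id`, and consequently there is a unique `K`-algebra homomorphism
`A → End_K(M)` sending `X` to `P_X` and `Y` to `P_Y` (making `M = K[x] × (ℕ → K[x])`
a left `A`-module). -/
theorem stmt8 :
    PX K ∘ₗ PY K = LinearMap.id ∧
    ∃! φ : Jac K →ₐ[K] Module.End K (Theta K), φ (Xg K) = PX K ∧ φ (Yg K) = PY K := by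

  have hXY : PX K ∘ₗ PY K = LinearMap.id := by
    apply LinearMap.ext
    intro p
    refine Prod.ext ?_ (funext fun n => ?_)
    · simp [PX, PY]
    · match n with
      | 0 => simp [PX, PY]
      | (k+1) => simp [PX, PY]
  refine ⟨hXY, ?_⟩
  let f : FreeAlgebra K (Fin 2) →ₐ[K] Module.End K (Theta K) :=
    FreeAlgebra.lift K (fun i => if i = 0 then PX K else PY K)
  have hf : ∀ a b : FreeAlgebra K (Fin 2), JacRel K a b → f a = f b := by
    rintro a b ⟨ha, hb⟩
    subst ha; subst hb
    simp only [map_mul, map_one, f, FreeAlgebra.lift_ι_apply]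
    norm_num
    exact hXY
  let φ : Jac K →ₐ[K] Module.End K (Theta K) :=
    RingQuot.liftAlgHom K ⟨f, hf⟩
  have hφX : φ (Xg K) = PX K := by
    simp [φ, Xg, RingQuot.liftAlgHom_mkAlgHom_apply, f]
  have hφY : φ (Yg K) = PY K := by
    simp [φ, Yg, RingQuot.liftAlgHom_mkAlgHom_apply, f]
  refine ⟨φ, ⟨hφX, hφY⟩, ?_⟩
  rintro ψ ⟨hψX, hψY⟩
  have : ψ.comp (RingQuot.mkAlgHom K (JacRel K)) = φ.comp (RingQuot.mkAlgHom K (JacRel K)) := by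
    apply FreeAlgebra.hom_ext
    funext i
    fin_cases i
    · simpa [Xg] using hψX.trans hφX.symm
    · simpa [Yg] using hψY.trans hφY.symm
  apply AlgHom.ext
  intro x
  obtain ⟨y, rfl⟩ := RingQuot.mkAlgHom_surjective K (JacRel K) x
  exact AlgHom.congr_fun this y
end
end
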